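/- The integral $\int_{r_0/R}^1 \frac{2 z^{-1} - 3 z + 1}{(1-z^2)^{3/2}}\,dz$ (the $D=4$ time-of-flight correction integrand) diverges to $+\infty$ as $R \to \infty$ with $r_0 > 0$ fixed; more precisely it equals $2\ln(2R/r_0) + 1 + o(1)$ as $R/r_0 \to \infty$. -/

import Mathlib

/-!
For `0 < z < 1` the integrand equals `(3z + 2) / (z (1 + z) √(1 - z²))`, which is nonnegative and
has the elementary antiderivative `F z = 2 log z - 2 log (1 + √(1 - z²)) - √(1 - z²) / (1 + z)`
with `F 1 = 0`. Nonnegativity makes the improper integral at `z = 1` an honest Lebesgue integral,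
so `∫ z in a..1 = -F a = 2 log (2 / a) + 1 + ρ a`, where `ρ` is continuous with `ρ 0 = 0`.
Taking `a = r₀ / R` gives both the divergence and the asymptotics.
-/

open Real Filter intervalIntegral

open Set Topology MeasureTheory

lemma Real.rpow_three_halves_eq_mul_sqrt {x : ℝ} (hx : 0 ≤ x) : x ^ ((3 : ℝ) / 2) = x * √x := by
  rw [show (3 : ℝ) / 2 = 1 + 1 / 2 by norm_num, rpow_add' hx (by norm_num), rpow_one,
    sqrt_eq_rpow]

noncomputable def tofIntegrand (z : ℝ) : ℝ :=
  (2 * z⁻¹ - 3 * z + 1) / (1 - z ^ 2) ^ ((3 : ℝ) / 2)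

noncomputable def tofAntideriv (z : ℝ) : ℝ :=
  2 * log z - 2 * log (1 + √(1 - z ^ 2)) - √(1 - z ^ 2) / (1 + z)

noncomputable def tofRemainder (a : ℝ) : ℝ :=
  2 * log ((1 + √(1 - a ^ 2)) / 2) + √(1 - a ^ 2) / (1 + a) - 1

lemma tofIntegrand_eq {z : ℝ} (h0 : 0 < z) (h1 : z < 1) :
    tofIntegrand z = (3 * z + 2) / (z * (1 + z) * √(1 - z ^ 2)) := by
  have hpos : 0 < 1 - z ^ 2 := by nlinarith
  have hs : 0 < √(1 - z ^ 2) := sqrt_pos.mpr hpos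
  rw [tofIntegrand, rpow_three_halves_eq_mul_sqrt hpos.le]
  field_simp
  ring

lemma tofIntegrand_nonneg {z : ℝ} (h0 : 0 < z) (h1 : z < 1) : 0 ≤ tofIntegrand z := by
  rw [tofIntegrand_eq h0 h1]
  positivity

lemma hasDerivAt_tofAntideriv {z : ℝ} (h0 : 0 < z) (h1 : z < 1) :
    HasDerivAt tofAntideriv (tofIntegrand z) z := by
  have hpos : 0 < 1 - z ^ 2 := by nlinarith
  have hs : 0 < √(1 - z ^ 2) := sqrt_pos.mpr hpos
  have hs2 : √(1 - z ^ 2) ^ 2 = 1 - z ^ 2 := sq_sqrt hpos.le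
  have hsqrt : HasDerivAt (fun z : ℝ => √(1 - z ^ 2)) (-(2 * z) / (2 * √(1 - z ^ 2))) z := by
    simpa using ((hasDerivAt_pow 2 z).const_sub 1).sqrt hpos.ne'
  have hF : HasDerivAt tofAntideriv _ z :=
    (((hasDerivAt_log h0.ne').const_mul 2).sub
      (((hsqrt.const_add 1).log (by positivity)).const_mul 2)).sub
    (hsqrt.div ((hasDerivAt_id z).const_add 1) (by positivity))
  refine hF.congr_deriv ?_
  rw [tofIntegrand_eq h0 h1]
  field_simp
  linear_combination (2 * (1 + z) ^ 2 + z * (1 + √(1 - z ^ 2))) * hs2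

lemma continuousOn_tofAntideriv {a : ℝ} (ha : 0 < a) : ContinuousOn tofAntideriv (Icc a 1) := by
  have hz : ∀ z ∈ Icc a 1, 0 < z := fun z hz => ha.trans_le hz.1
  unfold tofAntideriv
  refine ContinuousOn.sub (ContinuousOn.sub ?_ ?_) ?_
  · exact continuousOn_const.mul (continuousOn_log.mono fun z hz' => (hz z hz').ne')
  · exact continuousOn_const.mul (ContinuousOn.log (by fun_prop) fun z _ => by positivity)
  · exact ContinuousOn.div (by fun_prop) (by fun_prop) fun z hz' => by linarith [hz z hz']

lemma integral_tofIntegrand {a : ℝ} (h0 : 0 < a) (h1 : a < 1) :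
    ∫ z in a..1, tofIntegrand z = 2 * log (2 / a) + 1 + tofRemainder a := by
  have hderiv : ∀ z ∈ Ioo a 1, HasDerivAt tofAntideriv (tofIntegrand z) z :=
    fun z hz => hasDerivAt_tofAntideriv (h0.trans hz.1) hz.2
  have hint : IntervalIntegrable tofIntegrand volume a 1 :=
    (intervalIntegrable_iff_integrableOn_Ioc_of_le h1.le).2 <|
      integrableOn_deriv_of_nonneg (continuousOn_tofAntideriv h0) hderiv
        fun z hz => tofIntegrand_nonneg (h0.trans hz.1) hz.2
  have hs : 0 < 1 + √(1 - a ^ 2) := by positivity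
  rw [integral_eq_sub_of_hasDerivAt_of_le h1.le (continuousOn_tofAntideriv h0) hderiv hint,
    tofRemainder, tofAntideriv, tofAntideriv, log_div two_ne_zero h0.ne',
    log_div hs.ne' two_ne_zero]
  norm_num
  ring

lemma tendsto_tofRemainder : Tendsto tofRemainder (𝓝 0) (𝓝 0) := by
  have h : ContinuousAt tofRemainder 0 := by
    unfold tofRemainder
    refine ContinuousAt.sub (ContinuousAt.add ?_ ?_) continuousAt_const
    · exact (ContinuousAt.log (by fun_prop) (by norm_num)).const_mul 2
    · exact ContinuousAt.div (by fun_prop) (by fun_prop) (by norm_num)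
  simpa [tofRemainder] using h.tendsto

theorem tof_correction_log_divergence_D4
    (r₀ : ℝ) (h₀ : 0 < r₀) :
    Tendsto (fun R : ℝ => ∫ z in (r₀ / R)..1, (2 * z⁻¹ - 3 * z + 1) / (1 - z ^ 2) ^ ((3 : ℝ) / 2))
      atTop atTop ∧
    Tendsto (fun R : ℝ =>
        (∫ z in (r₀ / R)..1, (2 * z⁻¹ - 3 * z + 1) / (1 - z ^ 2) ^ ((3 : ℝ) / 2)) -
          (2 * Real.log (2 * R / r₀) + 1))
      atTop (nhds 0) := by
  have hexpand : ∀ᶠ R in atTop, tofRemainder (r₀ / R) =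
      (∫ z in (r₀ / R)..1, tofIntegrand z) - (2 * log (2 * R / r₀) + 1) := by
    filter_upwards [eventually_gt_atTop r₀] with R hR
    have hR0 : 0 < R := h₀.trans hR
    rw [integral_tofIntegrand (div_pos h₀ hR0) ((div_lt_one hR0).2 hR),
      show 2 * R / r₀ = 2 / (r₀ / R) by field_simp]
    ring
  have hremainder := (tendsto_tofRemainder.comp
    (tendsto_const_nhds.div_atTop tendsto_id)).congr' hexpand
  have hlog : Tendsto (fun R : ℝ => 2 * log (2 * R / r₀) + 1) atTop atTop :=
    tendsto_atTop_add_const_right _ 1 <| (tendsto_log_atTop.comp <|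
      (tendsto_id.const_mul_atTop two_pos).atTop_div_const h₀).const_mul_atTop two_pos
  exact ⟨(hremainder.add_atTop hlog).congr fun R => sub_add_cancel _ _, hremainder⟩
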